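/- Let 𝓕 be an ω-closed family of nonempty inductive subsets of ω and let S = B_ω^𝓕 ∪ {0} be B_ω^𝓕 with an adjoined zero. Then every Hausdorff locally compact shift-continuous topology on S is either compact or discrete. -/

import Mathlib

/-- For `n : ℕ` and `F ⊆ ω`, `wShift n F` is the set `(−n)+F = {x ∈ ω : x + n ∈ F}`. -/
def wShift (n : ℕ) (F : Set ℕ) : Set ℕ := {x | x + n ∈ F}

/-- A family `𝓕` of subsets of `ω` is ω-closed if `F₁ ∩ ((−n)+F₂) ∈ 𝓕`
for all `n ∈ ω` and `F₁, F₂ ∈ 𝓕`. -/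
def OmegaClosed (𝓕 : Set (Set ℕ)) : Prop :=
  ∀ n : ℕ, ∀ F₁ ∈ 𝓕, ∀ F₂ ∈ 𝓕, F₁ ∩ wShift n F₂ ∈ 𝓕

/-- A subset `F ⊆ ω` is inductive if `n ∈ F` implies `n+1 ∈ F`. -/
def InductiveSet (F : Set ℕ) : Prop := ∀ n : ℕ, n ∈ F → n + 1 ∈ F

/-- The underlying set `ω × ω × 𝓕` of the semigroup `B_ω^𝓕`. -/
abbrev BF (𝓕 : Set (Set ℕ)) : Type := ℕ × ℕ × {F : Set ℕ // F ∈ 𝓕}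

/-- The multiplication of the semigroup `B_ω^𝓕`:
`(i₁,j₁,F₁)·(i₂,j₂,F₂) = (i₁−j₁+i₂, j₂, ((j₁−i₂)+F₁) ∩ F₂)` if `j₁ ≤ i₂`, and
`(i₁, j₁−i₂+j₂, F₁ ∩ ((i₂−j₁)+F₂))` if `j₁ ≥ i₂`. -/
def BFmul {𝓕 : Set (Set ℕ)} (h : OmegaClosed 𝓕) (a b : BF 𝓕) : BF 𝓕 :=
  if a.2.1 ≤ b.1 then
    (a.1 + (b.1 - a.2.1), b.2.1,
      ⟨wShift (b.1 - a.2.1) a.2.2.1 ∩ b.2.2.1, by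
        rw [Set.inter_comm]; exact h _ _ b.2.2.2 _ a.2.2.2⟩)
  else
    (a.1, b.2.1 + (a.2.1 - b.1),
      ⟨a.2.2.1 ∩ wShift (a.2.1 - b.1) b.2.2.1, h _ _ a.2.2.2 _ b.2.2.2⟩)

/-- `B_ω^𝓕` with an adjoined zero; `none` plays the role of the zero `0`. -/
abbrev BF0 (𝓕 : Set (Set ℕ)) : Type := Option (BF 𝓕)

/-- The multiplication of the semigroup `B_ω^𝓕` with an adjoined zero. -/
def BF0mul {𝓕 : Set (Set ℕ)} (h : OmegaClosed 𝓕) : BF0 𝓕 → BF0 𝓕 → BF0 𝓕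
  | some a, some b => some (BFmul h a b)
  | _, _ => none

/-! Every member of `𝓕` is an interval `[r, ∞)`, so the elements of `B_ω^𝓕` are triples
`(p, q, r)` and shifts act on them by explicit formulas. In a Hausdorff shift-continuous
topology, fixed-point sets and equalisers of shifts are closed. Around `(i, j, r)`, the points
moved by the shifts by the idempotents `(i+1, i+1, F₀)` and `(j+1, j+1, F₀)` (with `F₀` the
largest member of `𝓕`), and not equalised by two right shifts, form a finite neighbourhood:
every nonzero point is isolated.

If `0` is not isolated, let `K` be a compact neighbourhood of `0`. A continuous map fixing `0`
sends all but finitely many points of `K` into `K`, as the exceptions form a compact set of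
isolated points. Hence `K` is invariant, up to finitely many points, under the unit
translations of `p` and `q`, and so agrees up to a finite set with a union of layers
`r = const`. A left shift carries a row of any layer into any other layer, so this union is
everything or nothing; as `K` is infinite, `K` is cofinite and `S` is compact. -/

open Set Filter Topology

lemma InductiveSet.eq_Ici_sInf {F : Set ℕ} (hF : InductiveSet F) (hne : F.Nonempty) :
    F = Ici (sInf F) := by
  refine Subset.antisymm (fun x hx => Nat.sInf_le hx) fun x hx => ?_
  obtain ⟨d, rfl⟩ := Nat.exists_eq_add_of_le hx
  induction d with
  | zero => exact Nat.sInf_mem hne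
  | succ d ih => exact hF _ (ih (Nat.le_add_right _ _))

lemma wShift_Ici (n a : ℕ) : wShift n (Ici a) = Ici (a - n) := by
  ext x
  simp only [wShift, mem_ofPred_eq, mem_Ici]
  omega

namespace BF

variable {𝓕 : Set (Set ℕ)} (hcl : OmegaClosed 𝓕) {F₀ : {F // F ∈ 𝓕}}

noncomputable def coords (x : BF 𝓕) : ℕ × ℕ × ℕ := (x.1, x.2.1, sInf x.2.2.1)

lemma coords_injective (hne : ∀ F ∈ 𝓕, F.Nonempty) (hind : ∀ F ∈ 𝓕, InductiveSet F) :
    Function.Injective (coords (𝓕 := 𝓕)) := by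
  rintro ⟨p, q, F, hF⟩ ⟨p', q', F', hF'⟩ h
  simp only [coords, Prod.mk.injEq] at h
  obtain ⟨rfl, rfl, h⟩ := h
  congr
  rw [(hind F hF).eq_Ici_sInf (hne F hF), (hind F' hF').eq_Ici_sInf (hne F' hF'), h]

lemma coords_mul (hne : ∀ F ∈ 𝓕, F.Nonempty) (hind : ∀ F ∈ 𝓕, InductiveSet F)
    (x y : BF 𝓕) :
    coords (BFmul hcl x y) =
      if x.2.1 ≤ y.1 then
        (x.1 + (y.1 - x.2.1), y.2.1, max (sInf x.2.2.1 - (y.1 - x.2.1)) (sInf y.2.2.1))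
      else
        (x.1, y.2.1 + (x.2.1 - y.1), max (sInf x.2.2.1) (sInf y.2.2.1 - (x.2.1 - y.1))) := by
  obtain ⟨p, q, F, hF⟩ := x
  obtain ⟨p', q', F', hF'⟩ := y
  have hFi := (hind F hF).eq_Ici_sInf (hne F hF)
  have hF'i := (hind F' hF').eq_Ici_sInf (hne F' hF')
  unfold BFmul coords
  split_ifs <;>
  · simp only
    rw [hFi, hF'i, wShift_Ici, Ici_inter_Ici, csInf_Ici, csInf_Ici, csInf_Ici]

lemma exists_forall_sInf_le [Nonempty {F // F ∈ 𝓕}] :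
    ∃ F₀ : {F // F ∈ 𝓕}, ∀ F : {F // F ∈ 𝓕}, sInf F₀.1 ≤ sInf F.1 :=
  ⟨Function.argmin (fun F : {F // F ∈ 𝓕} => sInf F.1),
    fun F => Function.argmin_le (fun F : {F // F ∈ 𝓕} => sInf F.1) F⟩

lemma fst_mul_of_lt {x y : BF 𝓕} (h : y.1 < x.2.1) : (BFmul hcl x y).1 = x.1 := by
  simp [BFmul, not_le.mpr h]

lemma snd_mul_of_le {x y : BF 𝓕} (h : x.2.1 ≤ y.1) : (BFmul hcl x y).2.1 = y.2.1 := by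
  simp [BFmul, h]

lemma mul_eq_of_le_fst (hne : ∀ F ∈ 𝓕, F.Nonempty) (hind : ∀ F ∈ 𝓕, InductiveSet F)
    (hF₀ : ∀ F : {F // F ∈ 𝓕}, sInf F₀.1 ≤ sInf F.1) {n : ℕ} {x : BF 𝓕}
    (h : n ≤ x.1) : BFmul hcl (n, n, F₀) x = x := by
  have := hF₀ x.2.2
  apply coords_injective hne hind
  rw [coords_mul hcl hne hind]
  simp only [coords]
  grind

lemma mul_eq_of_le_snd (hne : ∀ F ∈ 𝓕, F.Nonempty) (hind : ∀ F ∈ 𝓕, InductiveSet F)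
    (hF₀ : ∀ F : {F // F ∈ 𝓕}, sInf F₀.1 ≤ sInf F.1) {n : ℕ} {x : BF 𝓕}
    (h : n ≤ x.2.1) : BFmul hcl x (n, n, F₀) = x := by
  have := hF₀ x.2.2
  apply coords_injective hne hind
  rw [coords_mul hcl hne hind]
  simp only [coords]
  grind

lemma mul_eq_mul_of_le (hne : ∀ F ∈ 𝓕, F.Nonempty) (hind : ∀ F ∈ 𝓕, InductiveSet F)
    (hF₀ : ∀ F : {F // F ∈ 𝓕}, sInf F₀.1 ≤ sInf F.1) {j : ℕ} {G : {F // F ∈ 𝓕}} {x : BF 𝓕}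
    (hj : x.2.1 ≤ j) (hG : sInf G.1 + j ≤ sInf x.2.2.1) :
    BFmul hcl x (j, j, G) = BFmul hcl x (j, j, F₀) := by
  have := hF₀ G
  apply coords_injective hne hind
  rw [coords_mul hcl hne hind, coords_mul hcl hne hind]
  grind

lemma mul_ne_mul_of_sInf_lt (hne : ∀ F ∈ 𝓕, F.Nonempty) (hind : ∀ F ∈ 𝓕, InductiveSet F)
    (hF₀ : ∀ F : {F // F ∈ 𝓕}, sInf F₀.1 ≤ sInf F.1) {G : {F // F ∈ 𝓕}} {x : BF 𝓕}
    (hG : sInf x.2.2.1 < sInf G.1) :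
    BFmul hcl x (x.2.1, x.2.1, G) ≠ BFmul hcl x (x.2.1, x.2.1, F₀) := by
  have := hF₀ x.2.2
  intro h
  have h' := congrArg coords h
  rw [coords_mul hcl hne hind, coords_mul hcl hne hind] at h'
  grind

lemma mul_shift_fst (hne : ∀ F ∈ 𝓕, F.Nonempty) (hind : ∀ F ∈ 𝓕, InductiveSet F)
    (hF₀ : ∀ F : {F // F ∈ 𝓕}, sInf F₀.1 ≤ sInf F.1) (x : BF 𝓕) :
    BFmul hcl (1, 0, F₀) x = (x.1 + 1, x.2.1, x.2.2) := by
  have := hF₀ x.2.2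
  apply coords_injective hne hind
  rw [coords_mul hcl hne hind]
  simp only [coords]
  grind

lemma mul_unshift_fst (hne : ∀ F ∈ 𝓕, F.Nonempty) (hind : ∀ F ∈ 𝓕, InductiveSet F)
    (hF₀ : ∀ F : {F // F ∈ 𝓕}, sInf F₀.1 ≤ sInf F.1) (x : BF 𝓕) :
    BFmul hcl (0, 1, F₀) (x.1 + 1, x.2.1, x.2.2) = x := by
  have := hF₀ x.2.2
  apply coords_injective hne hind
  rw [coords_mul hcl hne hind]
  simp only [coords]
  grind

lemma mul_shift_snd (hne : ∀ F ∈ 𝓕, F.Nonempty) (hind : ∀ F ∈ 𝓕, InductiveSet F)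
    (hF₀ : ∀ F : {F // F ∈ 𝓕}, sInf F₀.1 ≤ sInf F.1) (x : BF 𝓕) :
    BFmul hcl x (0, 1, F₀) = (x.1, x.2.1 + 1, x.2.2) := by
  have := hF₀ x.2.2
  apply coords_injective hne hind
  rw [coords_mul hcl hne hind]
  simp only [coords]
  grind

lemma mul_unshift_snd (hne : ∀ F ∈ 𝓕, F.Nonempty) (hind : ∀ F ∈ 𝓕, InductiveSet F)
    (hF₀ : ∀ F : {F // F ∈ 𝓕}, sInf F₀.1 ≤ sInf F.1) (x : BF 𝓕) :
    BFmul hcl (x.1, x.2.1 + 1, x.2.2) (1, 0, F₀) = x := by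
  have := hF₀ x.2.2
  apply coords_injective hne hind
  rw [coords_mul hcl hne hind]
  simp only [coords]
  grind

lemma mul_eq_of_sInf_lt (hne : ∀ F ∈ 𝓕, F.Nonempty) (hind : ∀ F ∈ 𝓕, InductiveSet F)
    {m : ℕ} (G F : {F // F ∈ 𝓕}) (hm : sInf F.1 < m) (j : ℕ) :
    BFmul hcl (0, m, G) (0, j, F) = (0, j + m, G) := by
  apply coords_injective hne hind
  rw [coords_mul hcl hne hind]
  simp only [coords]
  grind

end BF

lemma iff_of_forall_iff_succ {f : ℕ → Prop} (h : ∀ n, f n ↔ f (n + 1)) (m n : ℕ) :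
    f m ↔ f n := by
  have key : ∀ n, f 0 ↔ f n := fun n => by
    induction n with
    | zero => rfl
    | succ n ih => exact ih.trans (h n)
  exact (key m).symm.trans (key n)

lemma exists_eventually_iff_of_eventually_iff_succ {β : Type*} {P : ℕ × ℕ × β → Prop}
    (h₁ : ∀ᶠ x in cofinite, P x ↔ P (x.1 + 1, x.2.1, x.2.2))
    (h₂ : ∀ᶠ x in cofinite, P x ↔ P (x.1, x.2.1 + 1, x.2.2)) :
    ∃ v : β → Prop, ∀ᶠ x in cofinite, P x ↔ v x.2.2 := by
  set badRows := (fun x : ℕ × ℕ × β => (x.2.1, x.2.2)) ''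
    {x | ¬(P x ↔ P (x.1 + 1, x.2.1, x.2.2))}
  set badCols := (fun x : ℕ × ℕ × β => (x.1, x.2.2)) ''
    {x | ¬(P x ↔ P (x.1, x.2.1 + 1, x.2.2))}
  have hRows : badRows.Finite := (eventually_cofinite.mp h₁).image _
  have hCols : badCols.Finite := (eventually_cofinite.mp h₂).image _
  have row_iff : ∀ q b, (q, b) ∉ badRows → ∀ p p', P (p, q, b) ↔ P (p', q, b) :=
    fun q b h => iff_of_forall_iff_succ fun p => not_not.mp fun hp => h ⟨(p, q, b), hp, rfl⟩
  have col_iff : ∀ p b, (p, b) ∉ badCols → ∀ q q', P (p, q, b) ↔ P (p, q', b) :=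
    fun p b h => iff_of_forall_iff_succ fun q => not_not.mp fun hq => h ⟨(p, q, b), hq, rfl⟩
  have goodRow : ∀ b, ∃ q, (q, b) ∉ badRows := fun b =>
    (hRows.preimage (Prod.mk_left_injective b).injOn).exists_notMem
  have goodCol : ∀ b, ∃ p, (p, b) ∉ badCols := fun b =>
    (hCols.preimage (Prod.mk_left_injective b).injOn).exists_notMem
  choose q₀ hq₀ using goodRow
  choose p₀ hp₀ using goodCol
  have hJ : {x : ℕ × ℕ × β | (x.2.1, x.2.2) ∈ badRows ∧ (x.1, x.2.2) ∈ badCols}.Finite :=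
    ((hRows.prod hCols).image fun u => (u.2.1, u.1.1, u.1.2)).subset
      fun x hx => ⟨((x.2.1, x.2.2), (x.1, x.2.2)), hx, rfl⟩
  refine ⟨fun b => P (p₀ b, q₀ b, b), ?_⟩
  filter_upwards [hJ.eventually_cofinite_notMem] with ⟨p, q, b⟩ hx
  rcases not_and_or.mp hx with hq | hp
  · exact (row_iff q b hq p (p₀ b)).trans (col_iff _ b (hp₀ b) q (q₀ b))
  · exact (col_iff p b hp q (q₀ b)).trans (row_iff _ b (hq₀ b) p (p₀ b))

section CompactNhds

variable {X : Type*} [TopologicalSpace X] {K : Set X} {z : X}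

lemma IsCompact.eventually_mem_interior (hK : IsCompact K) (hKz : K ∈ 𝓝 z)
    (hiso : ∀ x ≠ z, IsOpen ({x} : Set X)) {f : X → X} (hf : Continuous f) (hfz : f z = z) :
    ∀ᶠ x in cofinite, x ∈ K → f x ∈ interior K := by
  have hfin : (K ∩ (f ⁻¹' interior K)ᶜ).Finite := by
    refine (hK.inter_right (isOpen_interior.preimage hf).isClosed_compl).finite ?_
    refine isDiscrete_iff_forall_mem_exists_isOpen.mpr fun x hx => ⟨{x}, hiso x ?_, ?_⟩
    · rintro rfl
      exact hx.2 (by rw [mem_preimage, hfz]; exact mem_interior_iff_mem_nhds.mpr hKz)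
    · exact inter_eq_left.mpr (singleton_subset_iff.mpr hx)
  exact eventually_cofinite.mpr (hfin.subset fun x hx => Classical.not_imp.mp hx)

lemma IsCompact.eventually_mem_iff (hK : IsCompact K) (hKz : K ∈ 𝓝 z)
    (hiso : ∀ x ≠ z, IsOpen ({x} : Set X)) {f g : X → X} (hf : Continuous f)
    (hg : Continuous g) (hfz : f z = z) (hgz : g z = z) (hgf : Function.LeftInverse g f) :
    ∀ᶠ x in cofinite, x ∈ K ↔ f x ∈ K := by
  have hg' := hgf.injective.tendsto_cofinite.eventually
    (hK.eventually_mem_interior hKz hiso hg hgz)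
  filter_upwards [hK.eventually_mem_interior hKz hiso hf hfz, hg'] with x hfx hgx
  exact ⟨fun hx => interior_subset (hfx hx), fun hx => hgf x ▸ interior_subset (hgx hx)⟩

end CompactNhds

section ShiftContinuous

variable {𝓕 : Set (Set ℕ)} [TopologicalSpace (BF0 𝓕)] {K : Set (BF0 𝓕)}

lemma exists_isClosed_notMem_forall_sInf_lt [T2Space (BF0 𝓕)] (hcl : OmegaClosed 𝓕)
    (hne : ∀ F ∈ 𝓕, F.Nonempty) (hind : ∀ F ∈ 𝓕, InductiveSet F)
    (hsc : ∀ a : BF0 𝓕, Continuous (fun x => BF0mul hcl a x) ∧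
      Continuous (fun x => BF0mul hcl x a))
    {F₀ : {F // F ∈ 𝓕}} (hF₀ : ∀ F : {F // F ∈ 𝓕}, sInf F₀.1 ≤ sInf F.1) (a : BF 𝓕) :
    ∃ N, ∃ E : Set (BF0 𝓕), IsClosed E ∧ some a ∉ E ∧
      ∀ x : BF 𝓕, x.2.1 ≤ a.2.1 → N < sInf x.2.2.1 → some x ∈ E := by
  by_cases hG : ∃ G : {F // F ∈ 𝓕}, sInf a.2.2.1 < sInf G.1
  · obtain ⟨G, hG⟩ := hG
    refine ⟨sInf G.1 + a.2.1, {y | BF0mul hcl y (some (a.2.1, a.2.1, G)) =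
        BF0mul hcl y (some (a.2.1, a.2.1, F₀))}, isClosed_eq (hsc _).2 (hsc _).2,
      fun h => ?_, fun x hx hN => ?_⟩
    · exact BF.mul_ne_mul_of_sInf_lt hcl hne hind hF₀ hG (Option.some_inj.mp h)
    · exact congrArg some (BF.mul_eq_mul_of_le hcl hne hind hF₀ hx hN.le)
  · simp only [not_exists, not_lt] at hG
    exact ⟨sInf a.2.2.1, ∅, isClosed_empty, notMem_empty _,
      fun x _ hx => absurd (hG x.2.2) (not_le.mpr hx)⟩

theorem isOpen_singleton_some [T2Space (BF0 𝓕)] (hcl : OmegaClosed 𝓕)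
    (hne : ∀ F ∈ 𝓕, F.Nonempty) (hind : ∀ F ∈ 𝓕, InductiveSet F)
    (hsc : ∀ a : BF0 𝓕, Continuous (fun x => BF0mul hcl a x) ∧
      Continuous (fun x => BF0mul hcl x a))
    (a : BF 𝓕) : IsOpen ({some a} : Set (BF0 𝓕)) := by
  obtain ⟨i, j, H⟩ := a
  have : Nonempty {F // F ∈ 𝓕} := ⟨H⟩
  obtain ⟨F₀, hF₀⟩ := BF.exists_forall_sInf_le (𝓕 := 𝓕)
  obtain ⟨N, E, hE, haE, hNE⟩ :=
    exists_isClosed_notMem_forall_sInf_lt hcl hne hind hsc hF₀ (i, j, H)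
  refine isOpen_singleton_of_finite_mem_nhds _ (s :=
    {y | BF0mul hcl (some (i + 1, i + 1, F₀)) y ≠ y} ∩
      {y | BF0mul hcl y (some (j + 1, j + 1, F₀)) ≠ y} ∩ Eᶜ) ?_ ?_
  · refine IsOpen.mem_nhds (((isOpen_ne_fun (hsc _).1 continuous_id).inter
      (isOpen_ne_fun (hsc _).2 continuous_id)).inter hE.isOpen_compl)
      ⟨⟨fun h => ?_, fun h => ?_⟩, haE⟩
    · have := congrArg Prod.fst (Option.some_inj.mp h)
      rw [BF.fst_mul_of_lt hcl (Nat.lt_succ_self i)] at this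
      exact Nat.succ_ne_self i this
    · have := congrArg (fun x => x.2.1) (Option.some_inj.mp h)
      rw [BF.snd_mul_of_le hcl (x := (i, j, H)) (Nat.le_succ j)] at this
      exact Nat.succ_ne_self j this
  · refine ((((finite_Iic i).prod ((finite_Iic j).prod (finite_Iic N))).preimage
      (BF.coords_injective hne hind).injOn).image some).subset ?_
    rintro (_ | x) ⟨⟨h₁, h₂⟩, h₃⟩
    · exact absurd rfl h₁
    · refine ⟨x, ?_, rfl⟩
      simp only [BF.coords, mem_preimage, mem_prod, mem_Iic]
      have hj : x.2.1 ≤ j := not_lt.mp fun h =>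
        h₂ (congrArg some (BF.mul_eq_of_le_snd hcl hne hind hF₀ h))
      exact ⟨not_lt.mp fun h => h₁ (congrArg some (BF.mul_eq_of_le_fst hcl hne hind hF₀ h)),
        hj, not_lt.mp fun h => h₃ (hNE x hj h)⟩

lemma exists_eventually_some_mem_iff (hcl : OmegaClosed 𝓕)
    (hne : ∀ F ∈ 𝓕, F.Nonempty) (hind : ∀ F ∈ 𝓕, InductiveSet F)
    (hsc : ∀ a : BF0 𝓕, Continuous (fun x => BF0mul hcl a x) ∧
      Continuous (fun x => BF0mul hcl x a))
    (hK : IsCompact K) (hK0 : K ∈ 𝓝 none) (hiso : ∀ y ≠ none, IsOpen ({y} : Set (BF0 𝓕)))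
    {F₀ : {F // F ∈ 𝓕}} (hF₀ : ∀ F : {F // F ∈ 𝓕}, sInf F₀.1 ≤ sInf F.1) :
    ∃ v : {F // F ∈ 𝓕} → Prop, ∀ᶠ x : BF 𝓕 in cofinite, some x ∈ K ↔ v x.2.2 := by
  have shift_fst : ∀ᶠ y in cofinite, y ∈ K ↔ BF0mul hcl (some (1, 0, F₀)) y ∈ K := by
    refine hK.eventually_mem_iff hK0 hiso (hsc _).1 (hsc (some (0, 1, F₀))).1 rfl rfl ?_
    rintro (_ | x)
    · rfl
    · exact congrArg some (by rw [BF.mul_shift_fst hcl hne hind hF₀,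
        BF.mul_unshift_fst hcl hne hind hF₀])
  have shift_snd : ∀ᶠ y in cofinite, y ∈ K ↔ BF0mul hcl y (some (0, 1, F₀)) ∈ K := by
    refine hK.eventually_mem_iff hK0 hiso (hsc _).2 (hsc (some (1, 0, F₀))).2 rfl rfl ?_
    rintro (_ | x)
    · rfl
    · exact congrArg some (by rw [BF.mul_shift_snd hcl hne hind hF₀,
        BF.mul_unshift_snd hcl hne hind hF₀])
  refine exists_eventually_iff_of_eventually_iff_succ ?_ ?_
  · filter_upwards [Option.some_injective _ |>.tendsto_cofinite.eventually shift_fst] with x hx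
    rwa [← BF.mul_shift_fst hcl hne hind hF₀]
  · filter_upwards [Option.some_injective _ |>.tendsto_cofinite.eventually shift_snd] with x hx
    rwa [← BF.mul_shift_snd hcl hne hind hF₀]

lemma layer_mem_of_layer_mem (hcl : OmegaClosed 𝓕)
    (hne : ∀ F ∈ 𝓕, F.Nonempty) (hind : ∀ F ∈ 𝓕, InductiveSet F)
    (hsc : ∀ a : BF0 𝓕, Continuous (fun x => BF0mul hcl a x) ∧
      Continuous (fun x => BF0mul hcl x a))
    (hK : IsCompact K) (hK0 : K ∈ 𝓝 none) (hiso : ∀ y ≠ none, IsOpen ({y} : Set (BF0 𝓕)))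
    {v : {F // F ∈ 𝓕} → Prop} (hv : ∀ᶠ x : BF 𝓕 in cofinite, some x ∈ K ↔ v x.2.2)
    {F : {F // F ∈ 𝓕}} (hF : v F) (G : {F // F ∈ 𝓕}) : v G := by
  set m := sInf F.1 + 1
  have row_mem : ∀ᶠ j : ℕ in cofinite, some (0, j, F) ∈ K ↔ v F :=
    (Function.Injective.tendsto_cofinite (f := fun j : ℕ => ((0, j, F) : BF 𝓕))
      fun j j' h => by simpa using h).eventually hv
  have maps_to : ∀ᶠ j : ℕ in cofinite, some (0, j, F) ∈ K → some (0, j + m, G) ∈ K := by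
    have := hK.eventually_mem_interior hK0 hiso (hsc (some (0, m, G))).1 rfl
    filter_upwards [(Function.Injective.tendsto_cofinite
      (f := fun j : ℕ => (some (0, j, F) : BF0 𝓕)) fun j j' h => by simpa using h).eventually
        this] with j hj hjK
    have := interior_subset (hj hjK)
    rwa [BF0mul, BF.mul_eq_of_sInf_lt hcl hne hind G F (Nat.lt_succ_self _)] at this
  have row_mem' : ∀ᶠ j : ℕ in cofinite, some (0, j + m, G) ∈ K ↔ v G :=
    (Function.Injective.tendsto_cofinite (f := fun j : ℕ => ((0, j + m, G) : BF 𝓕))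
      fun j j' h => by simpa using h).eventually hv
  obtain ⟨j, h₁, h₂, h₃⟩ := (row_mem.and (maps_to.and row_mem')).exists
  exact h₃.mp (h₂ (h₁.mpr hF))

theorem compactSpace_of_not_isOpen_singleton_none [T2Space (BF0 𝓕)]
    [LocallyCompactSpace (BF0 𝓕)] (hcl : OmegaClosed 𝓕)
    (hne : ∀ F ∈ 𝓕, F.Nonempty) (hind : ∀ F ∈ 𝓕, InductiveSet F)
    (hsc : ∀ a : BF0 𝓕, Continuous (fun x => BF0mul hcl a x) ∧
      Continuous (fun x => BF0mul hcl x a))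
    (h0 : ¬IsOpen ({none} : Set (BF0 𝓕))) : CompactSpace (BF0 𝓕) := by
  obtain ⟨K, hK, hK0⟩ := exists_compact_mem_nhds (none : BF0 𝓕)
  have hiso : ∀ y ≠ none, IsOpen ({y} : Set (BF0 𝓕)) := by
    rintro (_ | x) h
    exacts [absurd rfl h, isOpen_singleton_some hcl hne hind hsc x]
  have : Nonempty {F // F ∈ 𝓕} := by
    by_contra hE
    refine h0 (isOpen_singleton_of_finite_mem_nhds _ hK0 ((finite_singleton none).subset ?_))
    rintro (_ | ⟨_, _, F⟩) _
    exacts [rfl, absurd ⟨F⟩ hE]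
  obtain ⟨F₀, hF₀⟩ := BF.exists_forall_sInf_le (𝓕 := 𝓕)
  obtain ⟨v, hv⟩ := exists_eventually_some_mem_iff hcl hne hind hsc hK hK0 hiso hF₀
  by_cases hfull : ∃ F, v F
  · obtain ⟨F, hF⟩ := hfull
    have hout : {x : BF 𝓕 | some x ∉ K}.Finite := eventually_cofinite.mp <|
      hv.mono fun x hx => hx.mpr (layer_mem_of_layer_mem hcl hne hind hsc hK hK0 hiso hv hF _)
    have hKc : Kᶜ.Finite := (hout.image some).subset <| by
      rintro (_ | x) hx
      exacts [absurd (mem_of_mem_nhds hK0) hx, ⟨x, hx, rfl⟩]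
    exact ⟨by simpa using hK.union hKc.isCompact⟩
  · have hin : {x : BF 𝓕 | some x ∈ K}.Finite := by
      simpa using eventually_cofinite.mp <| hv.mono fun x hx hxK => hfull ⟨_, hx.mp hxK⟩
    refine absurd (isOpen_singleton_of_finite_mem_nhds _ hK0
      (((hin.image some).insert none).subset ?_)) h0
    rintro (_ | x) hx
    exacts [mem_insert _ _, mem_insert_of_mem _ ⟨x, hx, rfl⟩]

end ShiftContinuous

/-- Theorem 3.9: every Hausdorff locally compact shift-continuous topology on
`S = B_ω^𝓕 ∪ {0}` (for an ω-closed family `𝓕` of nonempty inductive subsets of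
`ω`) is either compact or discrete. -/
theorem statement12 (𝓕 : Set (Set ℕ)) (hcl : OmegaClosed 𝓕)
    (hne : ∀ F ∈ 𝓕, F.Nonempty) (hind : ∀ F ∈ 𝓕, InductiveSet F)
    (τ : TopologicalSpace (BF0 𝓕)) (hT2 : @T2Space _ τ)
    (hlc : @LocallyCompactSpace _ τ)
    (hsc : ∀ a : BF0 𝓕, @Continuous _ _ τ τ (fun x => BF0mul hcl a x) ∧
        @Continuous _ _ τ τ (fun x => BF0mul hcl x a)) :
    @CompactSpace _ τ ∨ τ = ⊥ := by
  by_cases h0 : IsOpen[τ] ({none} : Set (BF0 𝓕))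
  · refine Or.inr (eq_bot_of_singletons_open fun y => ?_)
    rcases y with _ | x
    exacts [h0, isOpen_singleton_some hcl hne hind hsc x]
  · exact Or.inl (compactSpace_of_not_isOpen_singleton_none hcl hne hind hsc h0)
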